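/- Let μ be a σ-finite measure on (0,∞) with ∫₀^∞ r μ(dr) < ∞, and for integers N ≥ 1 and k ≥ 1 set w_{k,N} = (1/(k+1)!) ∫₀^∞ (Nr)^{k+1} e^{−Nr} μ(dr). Then for every N ≥ 1, ∑_{k≥1} (k/N) w_{k,N} = (1/N) ∫₀^∞ (e^{−Nr} − 1 + Nr) μ(dr) ≤ ∫₀^∞ r μ(dr); that is, the first moment of the measure π̃_{1,N} = ∑_{k≥1} w_{k,N} δ_{k/N} is bounded by ∫₀^∞ r μ(dr), uniformly in N. -/
import Mathlib

open MeasureTheory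

lemma exp_tsum (x : ℝ) : ∑' n : ℕ, x ^ n / n.factorial = Real.exp x := by
  rw [Real.exp_eq_exp_ℝ, NormedSpace.exp_eq_tsum_div]

lemma sum1 (x : ℝ) : ∑' k : ℕ, x ^ (k+2) / (k+2).factorial = Real.exp x - 1 - x := by
  have h := Summable.sum_add_tsum_nat_add (f := fun n => x ^ n / n.factorial) 2
    (Real.summable_pow_div_factorial x)
  simp [Finset.sum_range_succ, exp_tsum x] at h
  linarith [h, exp_tsum x]

lemma sumS1 (x : ℝ) : Summable (fun k : ℕ => x ^ (k+2) / (k+2).factorial) :=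
  (summable_nat_add_iff 2).2 (Real.summable_pow_div_factorial x)

lemma sumS2 (x : ℝ) : Summable (fun k : ℕ => x ^ (k+2) / (k+1).factorial) := by
  have : (fun k : ℕ => x ^ (k+2) / (k+1).factorial)
      = fun k : ℕ => x * (x ^ (k+1) / (k+1).factorial) := by
    funext k; ring
  rw [this]
  exact ((summable_nat_add_iff 1).2 (Real.summable_pow_div_factorial x)).mul_left x

lemma sum2 (x : ℝ) : ∑' k : ℕ, x ^ (k+2) / (k+1).factorial = x * (Real.exp x - 1) := by
  have h := Summable.sum_add_tsum_nat_add (f := fun n => x ^ n / n.factorial) 1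
    (Real.summable_pow_div_factorial x)
  simp [Finset.sum_range_succ, exp_tsum x] at h
  have h2 : (fun k : ℕ => x ^ (k+2) / (k+1).factorial)
      = fun k : ℕ => x * (x ^ (k+1) / (k+1).factorial) := by
    funext k; ring
  rw [h2, tsum_mul_left]
  rw [show (∑' k : ℕ, x ^ (k+1) / (k+1).factorial) = Real.exp x - 1 by linarith]

lemma hterm_eq (x : ℝ) (k : ℕ) : ((k:ℝ)+1) / (k+2).factorial * x ^ (k+2)
    = x ^ (k+2) / (k+1).factorial - x ^ (k+2) / (k+2).factorial := by
  have hf : ((k+2).factorial : ℝ) = (k+2) * (k+1).factorial := by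
    rw [show k+2 = (k+1)+1 from rfl, Nat.factorial_succ]; push_cast; ring
  have h1 : ((k+1).factorial : ℝ) ≠ 0 := Nat.cast_ne_zero.2 (Nat.factorial_ne_zero _)
  have h2 : ((k+2).factorial : ℝ) ≠ 0 := Nat.cast_ne_zero.2 (Nat.factorial_ne_zero _)
  field_simp
  rw [hf]; ring

lemma keySummable (x : ℝ) : Summable (fun k : ℕ => ((k:ℝ)+1) / (k+2).factorial * x ^ (k+2)) := by
  refine ((sumS2 x).sub (sumS1 x)).congr fun k => (hterm_eq x k).symm

lemma key (x : ℝ) : ∑' k : ℕ, ((k:ℝ)+1) / (k+2).factorial * x ^ (k+2)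
    = x * Real.exp x - Real.exp x + 1 := by
  rw [tsum_congr (hterm_eq x), Summable.tsum_sub (sumS2 x) (sumS1 x), sum1, sum2]
  ring

/-- With `w_{k,N} = (1/(k+1)!) ∫ (Nr)^{k+1} e^{-Nr} μ(dr)` and
`∫ r μ(dr) < ∞`, for every `N ≥ 1` the first moment of `π̃_{1,N} = ∑_{k≥1} w_{k,N} δ_{k/N}`
equals `(1/N) ∫ (e^{-Nr} - 1 + Nr) μ(dr)` and is bounded by `∫ r μ(dr)`. -/
theorem stmt9 (μ : Measure ℝ) [SigmaFinite μ]
    (hμ : Integrable (fun r => r) (μ.restrict (Set.Ioi 0)))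
    (w : ℕ → ℕ → ℝ)
    (hw : ∀ N k : ℕ, 1 ≤ N → 1 ≤ k → w N k =
      (1 / (Nat.factorial (k + 1) : ℝ)) *
        ∫ r in Set.Ioi (0:ℝ), ((N:ℝ) * r) ^ (k + 1) * Real.exp (-(N:ℝ) * r) ∂μ) :
    ∀ N : ℕ, 1 ≤ N →
      (∑' k : ℕ, (((k:ℝ) + 1) / N) * w N (k + 1)) =
        (1 / (N:ℝ)) *
          ∫ r in Set.Ioi (0:ℝ), (Real.exp (-(N:ℝ) * r) - 1 + N * r) ∂μ ∧
      (∑' k : ℕ, (((k:ℝ) + 1) / N) * w N (k + 1)) ≤ ∫ r in Set.Ioi (0:ℝ), r ∂μ := by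
  intro N hN
  have hn : (0:ℝ) < N := by exact_mod_cast hN
  set ν := μ.restrict (Set.Ioi (0:ℝ)) with hν
  set φ : ℕ → ℝ → ℝ := fun k r => ((N:ℝ) * r) ^ (k + 2) * Real.exp (-(N:ℝ) * r) with hφ
  set c : ℕ → ℝ := fun k => (((k:ℝ) + 1) / N) * (1 / ((k+2).factorial : ℝ)) with hc
  set h : ℝ → ℝ := fun r => (1 / (N:ℝ)) * (Real.exp (-(N:ℝ) * r) - 1 + N * r) with hh
  have hc0 : ∀ k, 0 ≤ c k := fun k => by
    rw [hc]; positivity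
  have hφcont : ∀ k, Continuous (φ k) := fun k => by
    rw [hφ]; fun_prop
  have hhcont : Continuous h := by rw [hh]; fun_prop
  -- term rewriting
  have hterm : ∀ k : ℕ, (((k:ℝ) + 1) / N) * w N (k+1)
      = c k * ∫ r in Set.Ioi (0:ℝ), φ k r ∂μ := by
    intro k
    rw [hw N (k+1) hN (Nat.succ_le_succ (Nat.zero_le k))]
    show (((k:ℝ) + 1) / N) * ((1 / ((k+2).factorial : ℝ)) * ∫ r in Set.Ioi (0:ℝ), φ k r ∂μ) = _
    rw [hc]; ring
  -- nonnegativity a.e.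
  have hφae : ∀ k, 0 ≤ᵐ[ν] φ k := by
    intro k
    filter_upwards [ae_restrict_mem measurableSet_Ioi] with r hr
    have hr' : (0:ℝ) < r := hr
    rw [hφ]; positivity
  have hL : ∀ k, ∫ r in Set.Ioi (0:ℝ), φ k r ∂μ
      = (∫⁻ r, ENNReal.ofReal (φ k r) ∂ν).toReal := fun k =>
    integral_eq_lintegral_of_nonneg_ae (hφae k) ((hφcont k).aestronglyMeasurable)
  have hg : ∀ k, ∫⁻ r, ENNReal.ofReal (c k * φ k r) ∂ν
      = ENNReal.ofReal (c k) * ∫⁻ r, ENNReal.ofReal (φ k r) ∂ν := by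
    intro k
    simp_rw [ENNReal.ofReal_mul (hc0 k)]
    exact lintegral_const_mul _ (ENNReal.measurable_ofReal.comp (hφcont k).measurable)
  -- pointwise sum
  have hpt : ∀ r : ℝ, 0 < r →
      ∑' k : ℕ, ENNReal.ofReal (c k * φ k r) = ENNReal.ofReal (h r) := by
    intro r hr
    have hnonneg : ∀ k, 0 ≤ c k * φ k r := by
      intro k
      refine mul_nonneg (hc0 k) ?_
      rw [hφ]; positivity
    have e1 : (fun k : ℕ => c k * φ k r)
        = fun k : ℕ => (Real.exp (-((N:ℝ)*r)) / N) *
            (((k:ℝ)+1) / (k+2).factorial * ((N:ℝ)*r) ^ (k+2)) := by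
      funext k
      rw [hc, hφ]
      simp only [neg_mul]
      ring
    have hsummable : Summable (fun k : ℕ => c k * φ k r) := by
      rw [e1]; exact (keySummable _).mul_left _
    rw [← ENNReal.ofReal_tsum_of_nonneg hnonneg hsummable]
    congr 1
    rw [e1, tsum_mul_left, key]
    have hx : Real.exp (-((N:ℝ)*r)) * Real.exp ((N:ℝ)*r) = 1 := by
      rw [← Real.exp_add]; simp
    rw [hh]
    simp only [neg_mul]
    linear_combination (((N:ℝ)*r - 1)/N) * hx
  -- swap sum and integral
  have hGmeas : ∀ k : ℕ, Measurable (fun r => ENNReal.ofReal (c k * φ k r)) := fun k =>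
    ENNReal.measurable_ofReal.comp (measurable_const.mul (hφcont k).measurable)
  have hIeq : ∑' k : ℕ, ∫⁻ r, ENNReal.ofReal (c k * φ k r) ∂ν
      = ∫⁻ r, ENNReal.ofReal (h r) ∂ν := by
    rw [← lintegral_tsum fun k => (hGmeas k).aemeasurable]
    refine lintegral_congr_ae ?_
    filter_upwards [ae_restrict_mem measurableSet_Ioi] with r hr using hpt r hr
  -- h ≤ r and 0 ≤ h a.e.
  have hle' : ∀ r : ℝ, 0 < r → h r ≤ r := by
    intro r hr
    have hE : Real.exp (-(N:ℝ)*r) ≤ 1 := by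
      rw [Real.exp_le_one_iff]
      nlinarith
    rw [hh]
    have h1 : (1 / (N:ℝ)) * (Real.exp (-(N:ℝ) * r) - 1 + N * r)
        ≤ (1 / (N:ℝ)) * ((N:ℝ) * r) := by
      apply mul_le_mul_of_nonneg_left (by linarith) (by positivity)
    calc (1 / (N:ℝ)) * (Real.exp (-(N:ℝ) * r) - 1 + N * r)
        ≤ (1 / (N:ℝ)) * ((N:ℝ) * r) := h1
      _ = r := by field_simp
  have hh0' : ∀ r : ℝ, 0 < r → 0 ≤ h r := by
    intro r hr
    have := Real.add_one_le_exp (-((N:ℝ)*r))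
    rw [hh]
    refine mul_nonneg (by positivity) ?_
    rw [neg_mul]
    linarith
  have hh0 : 0 ≤ᵐ[ν] h := by
    filter_upwards [ae_restrict_mem measurableSet_Ioi] with r hr using hh0' r hr
  have hhle : h ≤ᵐ[ν] fun r => r := by
    filter_upwards [ae_restrict_mem measurableSet_Ioi] with r hr using hle' r hr
  -- finiteness
  have hfin : ∫⁻ r, ENNReal.ofReal (h r) ∂ν ≠ ⊤ := by
    have h1 : ∫⁻ r, ENNReal.ofReal (h r) ∂ν ≤ ∫⁻ r, ‖r‖₊ ∂ν := by
      refine lintegral_mono_ae ?_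
      filter_upwards [ae_restrict_mem measurableSet_Ioi] with r hr
      calc ENNReal.ofReal (h r) ≤ ENNReal.ofReal r :=
            ENNReal.ofReal_le_ofReal (hle' r hr)
        _ ≤ ‖r‖₊ := Real.ofReal_le_enorm r
    exact (lt_of_le_of_lt h1 hμ.2).ne
  have hne : ∀ k : ℕ, ∫⁻ r, ENNReal.ofReal (c k * φ k r) ∂ν ≠ ⊤ := by
    intro k
    refine ne_top_of_le_ne_top hfin ?_
    rw [← hIeq]
    exact ENNReal.le_tsum k
  -- main identity
  have hmain : (∑' k : ℕ, (((k:ℝ) + 1) / N) * w N (k + 1)) = ∫ r, h r ∂ν := by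
    have e2 : ∀ k : ℕ, (((k:ℝ) + 1) / N) * w N (k + 1)
        = (∫⁻ r, ENNReal.ofReal (c k * φ k r) ∂ν).toReal := by
      intro k
      rw [hterm k, hL k, hg k, ENNReal.toReal_mul, ENNReal.toReal_ofReal (hc0 k)]
    rw [tsum_congr e2, ← ENNReal.tsum_toReal_eq hne, hIeq,
      integral_eq_lintegral_of_nonneg_ae hh0 hhcont.aestronglyMeasurable]
  constructor
  · rw [hmain, hh]
    exact integral_const_mul _ _
  · rw [hmain]
    exact integral_mono_of_nonneg hh0 hμ hhle
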